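/- Let μ be a σ-finite measure on a measurable space A, let Q : A → ℝ be measurable, and let α > 0 with Z := ∫ exp(Q(a)/α) dμ(a) ∈ (0, ∞). Define the Boltzmann (soft-policy) density g(a) := exp(Q(a)/α)/Z. Then for every probability density π with respect to μ whose differential entropy H(π) := −∫ π(a) log π(a) dμ(a) is well-defined and equals H(g), and for which ∫ Q(a) π(a) dμ(a) is well-defined, one has ∫ Q(a) π(a) dμ(a) ≤ ∫ Q(a) g(a) dμ(a). That is, among all densities with the same entropy as the Boltzmann density, the Boltzmann density maximizes the expected value of Q. -/

import Mathlib

open MeasureTheory Real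

/-! Since `log g = Q / α - log Z`, for every density `ρ` with `Q ρ` integrable the cross entropy
`∫ ρ log g` equals `(∫ Q ρ) / α - log Z`. Gibbs' inequality `∫ p log g ≤ ∫ p log p`, together with
`∫ p log p = ∫ g log g`, thus reads `(∫ Q p) / α - log Z ≤ (∫ Q g) / α - log Z`. -/

theorem mul_log_sub_mul_log_le_sub {p q : ℝ} (hp : 0 ≤ p) (hq : 0 < q) :
    p * log q - p * log p ≤ q - p := by
  rcases hp.eq_or_lt with rfl | hp
  · simpa using hq.le
  calc p * log q - p * log p = p * log (q / p) := by
        rw [log_div hq.ne' hp.ne']; ring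
    _ ≤ p * (q / p - 1) := mul_le_mul_of_nonneg_left (log_le_sub_one_of_pos (div_pos hq hp)) hp.le
    _ = q - p := by field_simp

theorem mul_log_exp_div (x q : ℝ) {α Z : ℝ} (hZ : 0 < Z) :
    x * log (exp (q / α) / Z) = q * x / α - log Z * x := by
  rw [log_div (exp_pos _).ne' hZ.ne', log_exp]; ring

section

variable {A : Type*} [MeasurableSpace A] {μ : Measure A}

theorem integral_mul_log_le_integral_mul_log {p q : A → ℝ}
    (hp : ∀ᵐ a ∂μ, 0 ≤ p a) (hq : ∀ᵐ a ∂μ, 0 < q a)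
    (hpint : Integrable p μ) (hqint : Integrable q μ) (hmass : ∫ a, q a ∂μ ≤ ∫ a, p a ∂μ)
    (hplogq : Integrable (fun a => p a * log (q a)) μ)
    (hplogp : Integrable (fun a => p a * log (p a)) μ) :
    ∫ a, p a * log (q a) ∂μ ≤ ∫ a, p a * log (p a) ∂μ := by
  have hpointwise : ∫ a, (p a * log (q a) - p a * log (p a)) ∂μ ≤ ∫ a, (q a - p a) ∂μ :=
    integral_mono_ae (hplogq.sub hplogp) (hqint.sub hpint) <| by
      filter_upwards [hp, hq] with a hpa hqa using mul_log_sub_mul_log_le_sub hpa hqa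
  rw [integral_sub hplogq hplogp, integral_sub hqint hpint] at hpointwise
  linarith

theorem integral_mul_log_boltzmann {Q ρ : A → ℝ} {α Z : ℝ} (hZ : 0 < Z)
    (hρ : Integrable ρ μ) (hρone : ∫ a, ρ a ∂μ = 1)
    (hQρ : Integrable (fun a => Q a * ρ a) μ) :
    ∫ a, ρ a * log (exp (Q a / α) / Z) ∂μ = (∫ a, Q a * ρ a ∂μ) / α - log Z := by
  simp_rw [mul_log_exp_div _ _ hZ]
  rw [integral_sub (hQρ.div_const α) (hρ.const_mul _), integral_div, integral_const_mul, hρone,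
    mul_one]

theorem integrable_mul_log_boltzmann {Q ρ : A → ℝ} {α Z : ℝ} (hZ : 0 < Z)
    (hρ : Integrable ρ μ) (hQρ : Integrable (fun a => Q a * ρ a) μ) :
    Integrable (fun a => ρ a * log (exp (Q a / α) / Z)) μ :=
  ((hQρ.div_const α).sub (hρ.const_mul (log Z))).congr
    (.of_forall fun _ => (mul_log_exp_div _ _ hZ).symm)

end

theorem boltzmann_maximizes_expected_Q_at_fixed_entropy_general
    {A : Type*} [MeasurableSpace A] (μ : Measure A)
    (Q : A → ℝ) (α : ℝ) (hα : 0 < α)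
    (hexp : Integrable (fun a => Real.exp (Q a / α)) μ)
    (Z : ℝ) (hZdef : Z = ∫ a, Real.exp (Q a / α) ∂μ) (hZpos : 0 < Z)
    (g : A → ℝ) (hgdef : ∀ a, g a = Real.exp (Q a / α) / Z)
    (hQg : Integrable (fun a => Q a * g a) μ)
    (p : A → ℝ) (hpnn : ∀ a, 0 ≤ p a)
    (hpint : Integrable p μ) (hpone : ∫ a, p a ∂μ = 1)
    (hQp : Integrable (fun a => Q a * p a) μ)
    (hEntp : Integrable (fun a => p a * Real.log (p a)) μ)
    (hent_eq : (-∫ a, p a * Real.log (p a) ∂μ) = (-∫ a, g a * Real.log (g a) ∂μ)) :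
    ∫ a, Q a * p a ∂μ ≤ ∫ a, Q a * g a ∂μ := by
  obtain rfl : g = fun a => exp (Q a / α) / Z := funext hgdef
  beta_reduce at hQg hent_eq ⊢
  have hgint : Integrable (fun a => exp (Q a / α) / Z) μ := hexp.div_const Z
  have hgone : ∫ a, exp (Q a / α) / Z ∂μ = 1 := by
    rw [integral_div, ← hZdef, div_self hZpos.ne']
  have hgibbs := integral_mul_log_le_integral_mul_log (.of_forall hpnn)
    (.of_forall fun a => div_pos (exp_pos (Q a / α)) hZpos) hpint hgint (by rw [hgone, hpone])
    (integrable_mul_log_boltzmann hZpos hpint hQp) hEntp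
  rw [neg_inj.mp hent_eq, integral_mul_log_boltzmann hZpos hpint hpone hQp,
    integral_mul_log_boltzmann hZpos hgint hgone hQg] at hgibbs
  exact (div_le_div_iff_of_pos_right hα).mp (by linarith)

/-- Among all probability densities (w.r.t. a σ-finite measure `μ`) whose differential
entropy is well-defined and equals that of the Boltzmann density
`g a = exp (Q a / α) / Z`, the Boltzmann density maximizes the expected value of `Q`. -/
theorem boltzmann_maximizes_expected_Q_at_fixed_entropy
    {A : Type*} [MeasurableSpace A] (μ : Measure A) [SigmaFinite μ]
    (Q : A → ℝ) (hQ : Measurable Q) (α : ℝ) (hα : 0 < α)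
    (hexp : Integrable (fun a => Real.exp (Q a / α)) μ)
    (Z : ℝ) (hZdef : Z = ∫ a, Real.exp (Q a / α) ∂μ) (hZpos : 0 < Z)
    (g : A → ℝ) (hgdef : ∀ a, g a = Real.exp (Q a / α) / Z)
    (hQg : Integrable (fun a => Q a * g a) μ)
    (hEntg : Integrable (fun a => g a * Real.log (g a)) μ)
    (p : A → ℝ) (hpmeas : Measurable p) (hpnn : ∀ a, 0 ≤ p a)
    (hpint : Integrable p μ) (hpone : ∫ a, p a ∂μ = 1)
    (hQp : Integrable (fun a => Q a * p a) μ)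
    (hEntp : Integrable (fun a => p a * Real.log (p a)) μ)
    (hent_eq : (-∫ a, p a * Real.log (p a) ∂μ) = (-∫ a, g a * Real.log (g a) ∂μ)) :
    ∫ a, Q a * p a ∂μ ≤ ∫ a, Q a * g a ∂μ :=
  boltzmann_maximizes_expected_Q_at_fixed_entropy_general μ Q α hα hexp Z hZdef hZpos g hgdef hQg p
    hpnn hpint hpone hQp hEntp hent_eq
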